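/- Let $(M,g)$ be a compact $m$-dimensional Riemannian manifold with $m\ge 3$, and $F$ a $C^2$ function with $F'>0$ on $(0,\infty)$. If $\frac{m-2}{m}F'(m/2)-F''(m/2)>0$, then the Morse index of the identity map satisfies $\mathrm{Ind}_F(I)\ge\dim(C/K)$, where $C$ is the space of conformal vector fields and $K$ the space of Killing vector fields on $M$. -/
import Mathlib


open MeasureTheory

/-- The Morse index of a quadratic functional `Q` on a space of fields: the supremum
of dimensions of subspaces on which `Q` is negative definite. -/
noncomputable def morseIndex {V : Type*} [AddCommGroup V] [Module ℝ V] (Q : V → ℝ) : ℕ∞ :=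
  ⨆ N ∈ {N : Submodule ℝ V | ∀ v ∈ N, v ≠ 0 → Q v < 0}, (Module.finrank ℝ N : ℕ∞)

/-- on a compact `m`-manifold (`m ≥ 3`), if
`((m-2)/m) F'(m/2) - F''(m/2) > 0`, then the Morse index of the identity map is at
least `dim (C/K)`, where `C` (resp. `K`) is the space of conformal (resp. Killing)
vector fields.  The second variation satisfies, for conformal `v`,
`Q_I^F(v) = (F''(m/2) + ((2-m)/m) F'(m/2)) ∫ (div v)²`, and a conformal field with
vanishing divergence is Killing (`div` is not a.e. zero for conformal `v ∉ K`). -/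
theorem stmt_5 (m : ℕ) (hm : 3 ≤ m)
    (M : Type*) [MeasurableSpace M] (μ : Measure M) [IsFiniteMeasure μ]
    (F F' F'' : ℝ → ℝ)
    (hF' : ∀ t, HasDerivAt F (F' t) t) (hF'' : ∀ t, HasDerivAt F' (F'' t) t)
    (hF'pos : ∀ t, 0 < t → 0 < F' t)
    (V : Type*) [AddCommGroup V] [Module ℝ V]      -- vector fields on M
    (C K : Submodule ℝ V) [FiniteDimensional ℝ C]  -- conformal and Killing fields
    (dv : V →ₗ[ℝ] (M → ℝ))                          -- divergence operator
    (QI : V → ℝ)                                    -- second variation at the identity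
    (hconfQ : ∀ v ∈ C, QI v =
      (F'' ((m : ℝ) / 2) + (2 - (m : ℝ)) / (m : ℝ) * F' ((m : ℝ) / 2))
        * ∫ x, dv v x ^ 2 ∂μ)
    (hker : ∀ v ∈ C, dv v = 0 → v ∈ K)
    (hpos : ∀ v ∈ C, dv v ≠ 0 → 0 < ∫ x, dv v x ^ 2 ∂μ)
    (hcond : ((m : ℝ) - 2) / (m : ℝ) * F' ((m : ℝ) / 2) - F'' ((m : ℝ) / 2) > 0) :
    (Module.finrank ℝ (↥C ⧸ Submodule.comap C.subtype K) : ℕ∞) ≤ morseIndex QI := by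
  classical
  set K' := Submodule.comap C.subtype K with hK'
  obtain ⟨N', hN'⟩ := Submodule.exists_isCompl K'
  set N : Submodule ℝ V := N'.map C.subtype with hN
  have hcneg : F'' ((m : ℝ) / 2) + (2 - (m : ℝ)) / (m : ℝ) * F' ((m : ℝ) / 2) < 0 := by
    have : (2 - (m : ℝ)) / (m : ℝ) * F' ((m : ℝ) / 2)
        = -(((m : ℝ) - 2) / (m : ℝ) * F' ((m : ℝ) / 2)) := by ring
    rw [this]; linarith
  have hNmem : N ∈ {N : Submodule ℝ V | ∀ v ∈ N, v ≠ 0 → QI v < 0} := by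
    intro v hv hv0
    obtain ⟨w, hwN, rfl⟩ := hv
    have hvC : (C.subtype w : V) ∈ C := w.2
    have hdv : dv (C.subtype w) ≠ 0 := by
      intro h
      have hwK : w ∈ K' := hker _ hvC h
      have : w ∈ K' ⊓ N' := ⟨hwK, hwN⟩
      rw [hN'.inf_eq_bot] at this
      exact hv0 (by rw [Submodule.mem_bot _ |>.mp this]; simp)
    have hint := hpos _ hvC hdv
    rw [hconfQ _ hvC]
    exact mul_neg_of_neg_of_pos hcneg hint
  have e1 : (↥C ⧸ K') ≃ₗ[ℝ] N' := Submodule.quotientEquivOfIsCompl K' N' hN'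
  have e2 : N' ≃ₗ[ℝ] N := Submodule.equivMapOfInjective C.subtype C.injective_subtype N'
  have hrank : Module.finrank ℝ (↥C ⧸ K') = Module.finrank ℝ N := by
    rw [e1.finrank_eq, e2.finrank_eq]
  rw [hrank]
  exact le_iSup₂ (f := fun (N : Submodule ℝ V) (_ : N ∈ {N : Submodule ℝ V | ∀ v ∈ N, v ≠ 0 → QI v < 0}) => (Module.finrank ℝ N : ℕ∞)) N hNmem
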